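/- For every r ≥ 1 and every n ≥ q^{r−1} − 1, the multi-poly-Bernoulli-Carlitz number with index s = (1, …, 1) (r ones) and j = (0, …, 0) satisfies BC_n^{(1,…,1),(0,…,0)} = Σ {n brace q^{i_1} − 1}_C · BC_{q^{i_1} − 1} · (BC_{q^{i_2} − 1}/Π(q^{i_2} − 1)) ⋯ (BC_{q^{i_r} − 1}/Π(q^{i_r} − 1)), where the sum runs over all integer tuples i_1 > i_2 > ⋯ > i_r ≥ 0 with q^{i_1} − 1 ≤ n. -/

import Mathlib

open Polynomial PowerSeries

noncomputable section

namespace Carlitz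

variable (F : Type) [Field F] [Fintype F]

/-- `q`, the cardinality of the finite field of constants `𝔽_q`. -/
def q : ℕ := Fintype.card F

/-- The Carlitz polynomial `D_i = ∏_{j=0}^{i-1} (θ^{q^i} - θ^{q^j})` (with `D_0 = 1`). -/
def Dpoly (i : ℕ) : Polynomial F :=
  ∏ j ∈ Finset.range i, (Polynomial.X ^ (q F) ^ i - Polynomial.X ^ (q F) ^ j)

/-- The Carlitz polynomial `L_i = ∏_{j=1}^{i} (θ - θ^{q^j})` (with `L_0 = 1`). -/
def Lpoly (i : ℕ) : Polynomial F :=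
  ∏ j ∈ Finset.range i, (Polynomial.X - Polynomial.X ^ (q F) ^ (j + 1))

/-- The Carlitz factorial `Π(n) = ∏_i D_i^{n_i}` where `n = Σ_i n_i q^i` is the base-`q`
expansion of `n`.  This also equals the Carlitz gamma `Γ_{n+1}`. -/
def cfact (n : ℕ) : Polynomial F :=
  ∏ i ∈ Finset.range (Nat.digits (q F) n).length,
    (Dpoly F i) ^ ((Nat.digits (q F) n).getD i 0)

/-- The inclusion `A = 𝔽_q[θ] → k = 𝔽_q(θ)`. -/
def toK : Polynomial F →+* RatFunc F := algebraMap _ _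

/-- The Carlitz exponential `e_C(z) = Σ_{i≥0} z^{q^i}/D_i` as a power series over `k`. -/
def eC : PowerSeries (RatFunc F) :=
  PowerSeries.mk fun n => ∑ i ∈ Finset.range (n + 1),
    if (q F) ^ i = n then (toK F (Dpoly F i))⁻¹ else 0

/-- The Bernoulli-Carlitz numbers `BC_n`, defined by `Σ_n BC_n z^n/Π(n) = z/e_C(z)`:
since `e_C(z) = z · u(z)` where `u(z) = Σ_m (coeff_{m+1} e_C) z^m` has constant term `1`,
we have `z/e_C(z) = u(z)⁻¹` and `BC_n = Π(n) · coeff_n (u⁻¹)`. -/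
def BCnum (n : ℕ) : RatFunc F :=
  toK F (cfact F n) *
    PowerSeries.coeff n
      (PowerSeries.mk fun m => PowerSeries.coeff (m + 1) (eC F))⁻¹

/-- The Stirling-Carlitz numbers of the second kind `{n brace m}_C`, defined by
`Σ_n {n brace m}_C z^n/Π(n) = e_C(z)^m/Π(m)`, i.e. `{n brace m}_C = Π(n)·coeff_n(e_C^m)/Π(m)`. -/
def StC (n m : ℕ) : RatFunc F :=
  toK F (cfact F n) * PowerSeries.coeff n (eC F ^ m) * (toK F (cfact F m))⁻¹

/-- The (finite) set of strictly decreasing tuples `i : Fin r → ℕ`,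
`i_1 > i_2 > ⋯ > i_r ≥ 0`, with all values `< N`. -/
def decTuples (r N : ℕ) : Finset (Fin r → ℕ) :=
  (Finset.univ.filter fun i : Fin r → Fin N => ∀ a b : Fin r, a < b → i b < i a).image
    fun i l => (i l : ℕ)

/-- The leading (largest) entry `i_1` of a (strictly decreasing) tuple. -/
def lead {r : ℕ} (i : Fin r → ℕ) : ℕ := if h : 0 < r then i ⟨0, h⟩ else 0

/-- The multi-poly-Bernoulli-Carlitz numbers `BC_n^{s,j}`, defined by the generating series
`Σ_n BC_n^{s,j} z^n/Π(n) = Li_s(e_C(z)·u_{1 j_1}, u_{2 j_2}, …, u_{r j_r})/e_C(z)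
 = Σ_{i_1 > ⋯ > i_r ≥ 0} e_C(z)^{q^{i_1}-1} ∏_l u_{l j_l}^{q^{i_l}}/L_{i_l}^{s_l}`,
written out coefficientwise (here `u l` is the datum `u_{l j_l} ∈ A`; the coefficient of
`z^n` in `e_C^{q^{i_1}-1}` vanishes whenever `i_1 > n`, so the sum below is complete). -/
def MPBC {r : ℕ} (s : Fin r → ℕ) (u : Fin r → Polynomial F) (n : ℕ) : RatFunc F :=
  toK F (cfact F n) * ∑ i ∈ decTuples r (n + 1),
    PowerSeries.coeff n (eC F ^ ((q F) ^ lead i - 1)) *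
      ∏ l, (toK F (u l)) ^ ((q F) ^ (i l)) * ((toK F (Lpoly F (i l))) ^ (s l))⁻¹

/-- The two-variable rational function field `K₂ = 𝔽_q(θ)(t)`. -/
abbrev K2 := RatFunc (RatFunc F)

/-- The inclusion `k = 𝔽_q(θ) → 𝔽_q(θ)(t)`. -/
def liftK : RatFunc F →+* K2 F :=
  (algebraMap (Polynomial (RatFunc F)) (K2 F)).comp Polynomial.C

/-- The inclusion `A = 𝔽_q[θ] → 𝔽_q(θ)(t)`. -/
def liftA : Polynomial F →+* K2 F := (liftK F).comp (toK F)

/-- The inclusion of constants `𝔽_q → 𝔽_q(θ)(t)`. -/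
def liftF : F →+* K2 F := (liftA F).comp Polynomial.C

/-- Substitution `θ ↦ t` on a polynomial `P ∈ 𝔽_q[θ]`, landing in `𝔽_q(θ)(t)`
(where `t` is the outer variable `RatFunc.X`); e.g. `D_i|_{θ=t}`. -/
def subT (P : Polynomial F) : K2 F :=
  Polynomial.eval (RatFunc.X : K2 F) (P.map (liftF F))

/-- Evaluation of a polynomial in `A[t]` in `𝔽_q(θ)(t)` (coefficients included via
`A → 𝔽_q(θ)`, the variable `t` sent to the outer `RatFunc.X`). -/
def evalAT (h : Polynomial (Polynomial F)) : K2 F :=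
  Polynomial.eval (RatFunc.X : K2 F) (h.map (liftA F))

/-- The power series `1 - Σ_{i≥0} (∏_{j=1}^{i}(t^{q^i} - θ^{q^j})/D_i|_{θ=t}) x^{q^i}`
appearing in the definition of the Anderson-Thakur polynomials. -/
def ATgen : PowerSeries (K2 F) :=
  1 - PowerSeries.mk fun m => ∑ i ∈ Finset.range (m + 1),
    if (q F) ^ i = m then
      (∏ j ∈ Finset.range i,
        ((RatFunc.X : K2 F) ^ (q F) ^ i - (liftK F RatFunc.X) ^ (q F) ^ (j + 1))) *
        (subT F (Dpoly F i))⁻¹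
    else 0

/-- `H : ℕ → A[t]` is the family of Anderson-Thakur polynomials iff
`{1 - Σ_i (∏_{j=1}^{i}(t^{q^i} - θ^{q^j})/D_i|_{θ=t}) x^{q^i}}⁻¹ = Σ_n (H_n/Γ_{n+1}|_{θ=t}) x^n`,
i.e. the product of the left-hand factor with the right-hand series equals `1`. -/
def IsATFamily (H : ℕ → Polynomial (Polynomial F)) : Prop :=
  ATgen F * (PowerSeries.mk fun n => evalAT F (H n) * (subT F (cfact F n))⁻¹) = 1

/-- Reduction of a rational function `x ∈ k` whose denominator is coprime to `℘`
into `A/℘A`: reduce numerator and denominator (in lowest terms) and divide. -/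
def redmod (℘ : Polynomial F) (x : RatFunc F) : Polynomial F ⧸ Ideal.span {℘} :=
  Ideal.Quotient.mk (Ideal.span {℘}) x.num *
    Ring.inverse (Ideal.Quotient.mk (Ideal.span {℘}) x.denom)

/-- The finite multiple zeta value `ζ_{𝒜_k}(s)_℘ ∈ A/℘A`: the sum of
`1/(a_1^{s_1} ⋯ a_r^{s_r})` over monic `a_1, …, a_r ∈ A` with
`deg ℘ > deg a_1 > ⋯ > deg a_r ≥ 0`. -/
def finMZV (℘ : Polynomial F) {r : ℕ} (s : Fin r → ℕ) : Polynomial F ⧸ Ideal.span {℘} :=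
  ∑ᶠ a ∈ {a : Fin r → Polynomial F |
      (∀ l, (a l).Monic) ∧ (StrictAnti fun l => (a l).natDegree) ∧
        ∀ l, (a l).natDegree < ℘.natDegree},
    ∏ l, Ring.inverse (Ideal.Quotient.mk (Ideal.span {℘}) (a l) ^ (s l))

/-- The finite Carlitz multiple polylogarithm
`Li_{𝒜_k,s}(u_1, …, u_r)_℘ = Σ_{deg ℘ > i_1 > ⋯ > i_r ≥ 0} u_1^{q^{i_1}} ⋯ u_r^{q^{i_r}}
/ (L_{i_1}^{s_1} ⋯ L_{i_r}^{s_r}) ∈ A/℘A`. -/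
def finCMPL (℘ : Polynomial F) {r : ℕ} (s : Fin r → ℕ) (u : Fin r → Polynomial F) :
    Polynomial F ⧸ Ideal.span {℘} :=
  ∑ i ∈ decTuples r ℘.natDegree,
    ∏ l, Ideal.Quotient.mk (Ideal.span {℘}) (u l) ^ ((q F) ^ (i l)) *
      Ring.inverse (Ideal.Quotient.mk (Ideal.span {℘}) (Lpoly F (i l)) ^ (s l))

/-!
For `s = (1, …, 1)` and `u = 1`, the summand of `BC_n^{s,j}` at `i_1 > ⋯ > i_r` is
`Π(n) [z^n] e_C(z)^{q^{i_1}-1} ∏_l L_{i_l}⁻¹`, and `[z^n] e_C(z)^m = 0` for `m > n`. So the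
theorem is Carlitz's evaluation `BC_{q^j-1} = Π(q^j-1)/L_j`, i.e. `[z^{q^j-1}] v = L_j⁻¹` for
`v = z/e_C(z)`.

Since `e_C(z) - z` is supported on multiples of `q`, expanding `v` as a geometric series gives
`[z^{qm}] v = ([z^m] v)^q`. The coefficient of `z^{q^j}` in `e_C · v = z` then reads
`Σ_{i+l=j} D_i⁻¹ ([z^{q^l-1}] v)^{q^i} = 0` for `j ≥ 1`, and `L_l⁻¹` satisfies the same relation:
`Σ_{i+l=j} D_i⁻¹ L_l^{-q^i} = 0` is `e_C(log_C z) = z`, which telescopes by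
`D_{i+1} = (θ^{q^{i+1}} - θ) D_i^q` and `L_{l+1} = L_l (θ - θ^{q^{l+1}})`. Induction on `j`.
-/

end Carlitz

section FiniteFieldAlgebra

variable {K R : Type*} [Field K] [Fintype K] [CommRing R] [Algebra K R]

theorem FiniteField.sum_pow_card {ι : Type*} (s : Finset ι) (f : ι → R) :
    (∑ i ∈ s, f i) ^ Fintype.card K = ∑ i ∈ s, f i ^ Fintype.card K :=
  map_sum (FiniteField.frobeniusAlgHom K R) f s

theorem FiniteField.sub_pow_card_pow (x y : R) (i : ℕ) :
    (x - y) ^ Fintype.card K ^ i = x ^ Fintype.card K ^ i - y ^ Fintype.card K ^ i := by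
  induction i with
  | zero => simp
  | succ i ih =>
    simp only [pow_succ, pow_mul, ih]
    exact map_sub (FiniteField.frobeniusAlgHom K R) _ _

theorem PowerSeries.coeff_card_mul_pow_card (f : R⟦X⟧) (m : ℕ) :
    coeff (Fintype.card K * m) (f ^ Fintype.card K) = coeff m f ^ Fintype.card K := by
  nontriviality R
  obtain ⟨p, _, e, hp, hq⟩ := FiniteField.card' K
  have : CharP R p := charP_of_injective_algebraMap' K p
  have : ExpChar R p := .prime hp
  rw [hq, ← MvPowerSeries.map_iterateFrobenius_expand p hp.ne_zero f e]
  change coeff _ (map _ (expand _ _ f)) = _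
  rw [PowerSeries.coeff_map, PowerSeries.coeff_expand_mul, iterateFrobenius_def]

end FiniteFieldAlgebra

theorem Polynomial.X_pow_ne_X_pow {R : Type*} [Semiring R] [Nontrivial R] {a b : ℕ} (h : a ≠ b) :
    (Polynomial.X : R[X]) ^ a ≠ Polynomial.X ^ b :=
  fun hab => h (by simpa using congrArg natDegree hab)

theorem RatFunc.X_pow_ne_X_pow {K : Type*} [Field K] {a b : ℕ} (h : a ≠ b) :
    (RatFunc.X : RatFunc K) ^ a ≠ RatFunc.X ^ b := by
  simpa using (RatFunc.algebraMap_injective K).ne (Polynomial.X_pow_ne_X_pow (R := K) h)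

namespace PowerSeries

theorem coeff_inv_one_sub {K : Type*} [Field K] {B : K⟦X⟧}
    (hB : constantCoeff B = 0) {m N : ℕ} (hmN : m < N) :
    coeff m (1 - B)⁻¹ = ∑ j ∈ Finset.range N, coeff m (B ^ j) := by
  have hunit : constantCoeff (1 - B) ≠ 0 := by simp [hB]
  have hgeom : ∑ j ∈ Finset.range N, B ^ j = (1 - B)⁻¹ - (1 - B)⁻¹ * B ^ N := by
    rw [← mul_one_sub, ← mul_neg_geom_sum, ← mul_assoc, PowerSeries.inv_mul_cancel _ hunit,
      one_mul]
  have htail : coeff m ((1 - B)⁻¹ * B ^ N) = 0 := by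
    refine X_pow_dvd_iff.mp (Dvd.dvd.mul_left ?_ _) m hmN
    exact pow_dvd_pow_of_dvd (X_dvd_iff.mpr hB) N
  rw [← map_sum, hgeom, map_sub, htail, sub_zero]

theorem expand_mk_coeff_mul {R : Type*} [CommRing R] {p : ℕ} (hp : p ≠ 0) {f : R⟦X⟧}
    (hf : ∀ n, ¬ p ∣ n → coeff n f = 0) : expand p hp (mk fun n => coeff (p * n) f) = f := by
  ext n
  rw [coeff_expand]
  split_ifs with h
  · rw [coeff_mk, Nat.mul_div_cancel' h]
  · exact (hf n h).symm

theorem coeff_card_mul_inv_one_sub {K L : Type*} [Field K] [Fintype K] [Field L]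
    [Algebra K L] {B : L⟦X⟧} (hB : ∀ n, ¬ Fintype.card K ∣ n → coeff n (X * B) = 0)
    (m : ℕ) :
    coeff (Fintype.card K * m) (1 - B)⁻¹ = coeff m (1 - B)⁻¹ ^ Fintype.card K := by
  have hK : 1 < Fintype.card K := Fintype.one_lt_card
  have hB0 : constantCoeff B = 0 := by
    rw [← coeff_zero_eq_constantCoeff_apply, ← coeff_succ_X_mul, zero_add]
    exact hB 1 (Nat.not_dvd_of_pos_of_lt one_pos hK)
  have hvanish : ∀ j, ¬ Fintype.card K ∣ j → coeff (Fintype.card K * m) (B ^ j) = 0 := by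
    intro j hj
    rw [← coeff_X_pow_mul, ← mul_pow, ← expand_mk_coeff_mul Fintype.card_ne_zero hB, ← map_pow,
      coeff_expand_of_not_dvd]
    rwa [Nat.dvd_add_right (dvd_mul_right _ m)]
  have hmultiples :
      ∑ c ∈ Finset.range (m + 1), coeff (Fintype.card K * m) (B ^ (Fintype.card K * c))
        = ∑ j ∈ Finset.range (Fintype.card K * (m + 1)), coeff (Fintype.card K * m) (B ^ j) := by
    refine Finset.sum_of_injOn (Fintype.card K * ·) (fun a _ b _ h => ?_) (fun c hc => ?_)
      (fun j hj hj' => hvanish j ?_) fun _ _ => rfl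
    · exact Nat.eq_of_mul_eq_mul_left (by omega) h
    · exact Finset.mem_range.mpr (Nat.mul_lt_mul_of_pos_left (Finset.mem_range.mp hc) (by omega))
    · rintro ⟨c, rfl⟩
      rw [Finset.mem_range] at hj
      exact hj' ⟨c, Finset.mem_range.mpr (lt_of_mul_lt_mul_left hj (Nat.zero_le _)), rfl⟩
  -- `(1 - B)⁻¹ = ∑ B ^ j`; at multiples of `q` only the `B ^ (q * c) = (B ^ c) ^ q` contribute.
  rw [coeff_inv_one_sub hB0 (Nat.lt_succ_self m), FiniteField.sum_pow_card (K := K),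
    coeff_inv_one_sub hB0 (N := Fintype.card K * (m + 1)) (by nlinarith), ← hmultiples]
  simp only [pow_mul', coeff_card_mul_pow_card]

end PowerSeries

namespace Carlitz

open Finset.HasAntidiagonal

variable (F : Type) [Field F] [Fintype F]

theorem one_lt_q : 1 < q F := Fintype.one_lt_card

theorem Dpoly_succ (i : ℕ) :
    Dpoly F (i + 1) = (Polynomial.X ^ q F ^ (i + 1) - Polynomial.X) * Dpoly F i ^ q F := by
  rw [Dpoly, Finset.prod_range_succ', pow_zero, pow_one, mul_comm, Dpoly, ← Finset.prod_pow]
  congr 1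
  refine Finset.prod_congr rfl fun j _ => ?_
  unfold q
  simpa only [pow_one, ← pow_mul, ← pow_succ] using (FiniteField.sub_pow_card_pow (K := F)
    ((Polynomial.X : F[X]) ^ Fintype.card F ^ i) (Polynomial.X ^ Fintype.card F ^ j) 1).symm

theorem Dpoly_ne_zero (i : ℕ) : Dpoly F i ≠ 0 := by
  refine Finset.prod_ne_zero_iff.mpr fun j hj => sub_ne_zero.mpr (X_pow_ne_X_pow (R := F) ?_)
  exact (Nat.pow_lt_pow_right (one_lt_q F) (Finset.mem_range.mp hj)).ne'

theorem Lpoly_ne_zero (i : ℕ) : Lpoly F i ≠ 0 := by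
  refine Finset.prod_ne_zero_iff.mpr fun j _ => sub_ne_zero.mpr ?_
  simpa using X_pow_ne_X_pow (R := F) (Nat.one_lt_pow j.succ_ne_zero (one_lt_q F)).ne

theorem cfact_ne_zero (n : ℕ) : cfact F n ≠ 0 :=
  Finset.prod_ne_zero_iff.mpr fun i _ => pow_ne_zero _ (Dpoly_ne_zero F i)

def D (i : ℕ) : RatFunc F := toK F (Dpoly F i)

def L (i : ℕ) : RatFunc F := toK F (Lpoly F i)

theorem D_ne_zero (i : ℕ) : D F i ≠ 0 := RatFunc.algebraMap_ne_zero (Dpoly_ne_zero F i)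

theorem L_ne_zero (i : ℕ) : L F i ≠ 0 := RatFunc.algebraMap_ne_zero (Lpoly_ne_zero F i)

theorem D_zero : D F 0 = 1 := by simp [D, Dpoly]

theorem L_zero : L F 0 = 1 := by simp [L, Lpoly]

theorem D_succ (i : ℕ) :
    D F (i + 1) = (RatFunc.X ^ q F ^ (i + 1) - RatFunc.X) * D F i ^ q F := by
  simp [D, Dpoly_succ, toK]

theorem L_succ (j : ℕ) : L F (j + 1) = L F j * (RatFunc.X - RatFunc.X ^ q F ^ (j + 1)) := by
  simp [L, Lpoly, Finset.prod_range_succ, toK]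

theorem X_pow_q_pow_sub_X_ne_zero {i : ℕ} (hi : i ≠ 0) :
    (RatFunc.X : RatFunc F) ^ q F ^ i - RatFunc.X ≠ 0 := by
  simpa using sub_ne_zero.mpr (RatFunc.X_pow_ne_X_pow (K := F) (Nat.one_lt_pow hi (one_lt_q F)).ne')

theorem inv_D_succ_mul_L_pow (i j : ℕ) :
    (RatFunc.X ^ q F ^ (i + 1) - RatFunc.X) * (D F (i + 1) * L F j ^ q F ^ (i + 1))⁻¹
      = (D F i * L F j ^ q F ^ i)⁻¹ ^ q F := by
  have h := X_pow_q_pow_sub_X_ne_zero F i.succ_ne_zero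
  have hL : L F j ^ q F ^ (i + 1) = (L F j ^ q F ^ i) ^ q F := by rw [← pow_mul, ← pow_succ]
  rw [D_succ, hL, mul_assoc, ← mul_pow, mul_inv, ← mul_assoc, mul_inv_cancel₀ h, one_mul, inv_pow]

theorem inv_D_mul_L_succ_pow (i j : ℕ) :
    (RatFunc.X ^ q F ^ (i + j + 1) - RatFunc.X ^ q F ^ i) * (D F i * L F (j + 1) ^ q F ^ i)⁻¹
      = -(D F i * L F j ^ q F ^ i)⁻¹ := by
  have h := sub_ne_zero.mpr (RatFunc.X_pow_ne_X_pow (K := F)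
    (Nat.pow_lt_pow_right (one_lt_q F) (by omega : i < i + j + 1)).ne)
  have hfrob : ((RatFunc.X : RatFunc F) - RatFunc.X ^ q F ^ (j + 1)) ^ q F ^ i
      = RatFunc.X ^ q F ^ i - RatFunc.X ^ q F ^ (i + j + 1) := by
    unfold q
    rw [FiniteField.sub_pow_card_pow (K := F) (R := RatFunc F), ← pow_mul, ← pow_add]
    ring_nf
  rw [L_succ, mul_pow, hfrob, ← neg_sub]
  field_simp [D_ne_zero, L_ne_zero]

theorem sum_antidiagonal_inv_D_mul_L_pow (m : ℕ) :
    ∑ p ∈ antidiagonal m, (D F p.1 * L F p.2 ^ q F ^ p.1)⁻¹ = if m = 0 then 1 else 0 := by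
  induction m with
  | zero => simp [D_zero, L_zero]
  | succ m ih =>
    set S := fun m => ∑ p ∈ antidiagonal m, (D F p.1 * L F p.2 ^ q F ^ p.1)⁻¹ with hS
    -- Split `θ^{q^{i+l}} - θ = (θ^{q^i} - θ) + (θ^{q^{i+l}} - θ^{q^i})`: the first part lowers `i`,
    -- the second lowers `l`.
    have key : (RatFunc.X ^ q F ^ (m + 1) - RatFunc.X) * S (m + 1) = S m ^ q F - S m := calc
      _ = ∑ p ∈ antidiagonal (m + 1),
            ((RatFunc.X ^ q F ^ p.1 - RatFunc.X) * (D F p.1 * L F p.2 ^ q F ^ p.1)⁻¹ +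
            (RatFunc.X ^ q F ^ (p.1 + p.2) - RatFunc.X ^ q F ^ p.1) *
              (D F p.1 * L F p.2 ^ q F ^ p.1)⁻¹) := by
        rw [hS, Finset.mul_sum]
        refine Finset.sum_congr rfl fun p hp => ?_
        rw [mem_antidiagonal.mp hp]
        ring
      _ = ∑ p ∈ antidiagonal m, (D F p.1 * L F p.2 ^ q F ^ p.1)⁻¹ ^ q F +
            ∑ p ∈ antidiagonal m, -(D F p.1 * L F p.2 ^ q F ^ p.1)⁻¹ := by
        rw [Finset.sum_add_distrib, Finset.Nat.sum_antidiagonal_succ,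
          Finset.Nat.sum_antidiagonal_succ']
        simp only [pow_zero, pow_one, sub_self, zero_mul, zero_add, add_zero, ← add_assoc,
          inv_D_succ_mul_L_pow, inv_D_mul_L_succ_pow]
      _ = S m ^ q F - S m := by
        simp only [hS]
        unfold q
        rw [FiniteField.sum_pow_card, Finset.sum_neg_distrib, ← sub_eq_add_neg]
    have hfix : S m ^ q F - S m = 0 := by
      simp only [hS, ih]
      split_ifs <;> simp [(zero_lt_one.trans (one_lt_q F)).ne']
    rw [hfix] at key
    exact (mul_eq_zero.mp key).resolve_left (X_pow_q_pow_sub_X_ne_zero F m.succ_ne_zero)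

def eCDivX : PowerSeries (RatFunc F) := PowerSeries.mk fun m => coeff (m + 1) (eC F)

theorem coeff_eC_q_pow (i : ℕ) : coeff (q F ^ i) (eC F) = (D F i)⁻¹ := by
  rw [eC, coeff_mk, Finset.sum_eq_single i (fun b _ hb => if_neg ?_) (fun hi => ?_), if_pos rfl]
  · rfl
  · exact (Nat.pow_right_injective (one_lt_q F)).ne hb
  · exact absurd (Finset.mem_range.mpr (Nat.lt_succ_of_lt (Nat.lt_pow_self (one_lt_q F)))) hi

theorem coeff_eC_of_forall_ne {n : ℕ} (hn : ∀ i, q F ^ i ≠ n) : coeff n (eC F) = 0 := by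
  rw [eC, coeff_mk]
  exact Finset.sum_eq_zero fun i _ => if_neg (hn i)

theorem X_mul_eCDivX : PowerSeries.X * eCDivX F = eC F := by
  rw [eCDivX, ← sub_const_eq_X_mul_shift, ← coeff_zero_eq_constantCoeff_apply,
    coeff_eC_of_forall_ne F fun i => (pow_pos (zero_lt_one.trans (one_lt_q F)) i).ne', map_zero,
    sub_zero]

theorem constantCoeff_eCDivX : constantCoeff (eCDivX F) = 1 := by
  rw [eCDivX, ← coeff_zero_eq_constantCoeff_apply, coeff_mk, zero_add,
    ← pow_zero (q F), coeff_eC_q_pow, D_zero, inv_one]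

theorem coeff_X_sub_eC_of_not_dvd {n : ℕ} (hn : ¬ q F ∣ n) :
    coeff n (PowerSeries.X - eC F) = 0 := by
  rcases eq_or_ne n 1 with rfl | hn1
  · rw [map_sub, PowerSeries.coeff_X, if_pos rfl, ← pow_zero (q F), coeff_eC_q_pow, D_zero,
      inv_one, sub_self]
  · rw [map_sub, PowerSeries.coeff_X, if_neg hn1, coeff_eC_of_forall_ne F, sub_zero]
    rintro (_ | i) rfl
    exacts [hn1 (pow_zero _), hn (dvd_pow_self _ i.succ_ne_zero)]

theorem coeff_q_pow_mul_inv_eCDivX (i m : ℕ) :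
    coeff (q F ^ i * m) (eCDivX F)⁻¹ = coeff m (eCDivX F)⁻¹ ^ q F ^ i := by
  induction i with
  | zero => simp
  | succ i ih =>
    have hB : ∀ n, ¬ Fintype.card F ∣ n → coeff n (PowerSeries.X * (1 - eCDivX F)) = 0 := by
      rw [mul_one_sub, X_mul_eCDivX]
      exact fun n hn => coeff_X_sub_eC_of_not_dvd F hn
    have := coeff_card_mul_inv_one_sub hB (q F ^ i * m)
    rw [sub_sub_cancel] at this
    rw [pow_succ', mul_assoc, pow_mul', ← ih]
    exact this

theorem q_pow_add_q_pow_mul_sub_one (i l : ℕ) :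
    q F ^ i + q F ^ i * (q F ^ l - 1) = q F ^ (i + l) := by
  have : q F ^ i ≤ q F ^ (i + l) := Nat.pow_le_pow_right (zero_lt_one.trans (one_lt_q F)) (by omega)
  rw [Nat.mul_sub_one, ← pow_add]
  omega

theorem eC_mul_inv_eCDivX : eC F * (eCDivX F)⁻¹ = PowerSeries.X := by
  rw [← X_mul_eCDivX, mul_assoc, PowerSeries.mul_inv_cancel _ (by simp [constantCoeff_eCDivX]),
    mul_one]

theorem sum_antidiagonal_inv_D_mul_coeff_inv_eCDivX {j : ℕ} (hj : j ≠ 0) :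
    ∑ p ∈ antidiagonal j, (D F p.1)⁻¹ * coeff (q F ^ p.1 * (q F ^ p.2 - 1)) (eCDivX F)⁻¹ = 0 := by
  have hq := one_lt_q F
  have hcoeff : coeff (q F ^ j) (eC F * (eCDivX F)⁻¹) = 0 := by
    rw [eC_mul_inv_eCDivX, PowerSeries.coeff_X, if_neg (Nat.one_lt_pow hj hq).ne']
  rw [← hcoeff, PowerSeries.coeff_mul]
  refine Finset.sum_of_injOn (fun p => (q F ^ p.1, q F ^ p.1 * (q F ^ p.2 - 1)))
    (fun a ha b hb hab => ?_) (fun a ha => ?_) (fun b hb hb' => ?_) fun p _ => ?_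
  · have h1 : a.1 = b.1 := Nat.pow_right_injective hq (congrArg Prod.fst hab)
    have ha' := mem_antidiagonal.mp ha
    have hb' := mem_antidiagonal.mp hb
    exact Prod.ext h1 (by omega)
  · rw [Finset.mem_coe, mem_antidiagonal] at ha ⊢
    rw [q_pow_add_q_pow_mul_sub_one, ha]
  · by_cases hpow : ∃ i, q F ^ i = b.1
    · obtain ⟨i, hi⟩ := hpow
      have hb1 := mem_antidiagonal.mp hb
      have hij : i ≤ j := (Nat.pow_le_pow_iff_right hq).mp (by omega)
      refine absurd ⟨(i, j - i), mem_antidiagonal.mpr (by simp [hij]), ?_⟩ hb'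
      have := q_pow_add_q_pow_mul_sub_one F i (j - i)
      rw [Nat.add_sub_cancel' hij] at this
      ext <;> simp only <;> omega
    · rw [coeff_eC_of_forall_ne F (not_exists.mp hpow), zero_mul]
  · rw [coeff_eC_q_pow]

theorem coeff_q_pow_sub_one_inv_eCDivX (j : ℕ) :
    coeff (q F ^ j - 1) (eCDivX F)⁻¹ = (L F j)⁻¹ := by
  induction j using Nat.strong_induction_on with
  | _ j ih =>
  rcases j with _ | j
  · simp [PowerSeries.coeff_inv, constantCoeff_eCDivX, L_zero]
  have hterm : ∀ p ∈ antidiagonal j,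
      (D F (p.1 + 1))⁻¹ * coeff (q F ^ (p.1 + 1) * (q F ^ p.2 - 1)) (eCDivX F)⁻¹
        = (D F (p.1 + 1) * L F p.2 ^ q F ^ (p.1 + 1))⁻¹ := fun p hp => by
    have hp2 : p.2 < j + 1 := by have := mem_antidiagonal.mp hp; omega
    rw [coeff_q_pow_mul_inv_eCDivX, ih p.2 hp2, mul_inv, inv_pow]
  have hcoeff := sum_antidiagonal_inv_D_mul_coeff_inv_eCDivX F j.succ_ne_zero
  have htelescope := sum_antidiagonal_inv_D_mul_L_pow F (j + 1)
  rw [Finset.Nat.sum_antidiagonal_succ, Finset.sum_congr rfl hterm] at hcoeff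
  rw [Finset.Nat.sum_antidiagonal_succ, if_neg j.succ_ne_zero] at htelescope
  simp only [D_zero, pow_zero, one_mul, inv_one, pow_one] at hcoeff htelescope
  linear_combination hcoeff - htelescope

theorem BCnum_q_pow_sub_one (j : ℕ) :
    BCnum F (q F ^ j - 1) = toK F (cfact F (q F ^ j - 1)) * (L F j)⁻¹ := by
  rw [BCnum, ← coeff_q_pow_sub_one_inv_eCDivX]
  rfl

theorem BCnum_q_pow_sub_one_div_cfact (j : ℕ) :
    BCnum F (q F ^ j - 1) / toK F (cfact F (q F ^ j - 1)) = (L F j)⁻¹ := by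
  have hc : toK F (cfact F (q F ^ j - 1)) ≠ 0 := RatFunc.algebraMap_ne_zero (cfact_ne_zero F _)
  rw [BCnum_q_pow_sub_one, mul_div_cancel_left₀ _ hc]

theorem StC_mul_BCnum_q_pow_sub_one (n j : ℕ) :
    StC F n (q F ^ j - 1) * BCnum F (q F ^ j - 1)
      = toK F (cfact F n) * coeff n (eC F ^ (q F ^ j - 1)) * (L F j)⁻¹ := by
  rw [← BCnum_q_pow_sub_one_div_cfact, StC]
  ring

theorem coeff_eC_pow_of_lt {n m : ℕ} (h : n < m) : coeff n (eC F ^ m) = 0 := by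
  rw [← X_mul_eCDivX, mul_pow]
  exact PowerSeries.coeff_X_pow_mul' .. |>.trans (if_neg (by omega))

theorem MPBC_ones (r : ℕ) (hr : 0 < r) (n : ℕ) :
    MPBC F (fun _ : Fin r => 1) (fun _ => (1 : Polynomial F)) n =
      ∑ i ∈ (decTuples r (n + 1)).filter (fun i => (q F) ^ lead i - 1 ≤ n),
        StC F n ((q F) ^ lead i - 1) * BCnum F ((q F) ^ lead i - 1) *
          ∏ l ∈ Finset.univ.erase (⟨0, hr⟩ : Fin r),
            BCnum F ((q F) ^ (i l) - 1) / toK F (cfact F ((q F) ^ (i l) - 1)) := by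
  have hterm : ∀ i : Fin r → ℕ,
      StC F n ((q F) ^ lead i - 1) * BCnum F ((q F) ^ lead i - 1) *
          ∏ l ∈ Finset.univ.erase (⟨0, hr⟩ : Fin r),
            BCnum F ((q F) ^ (i l) - 1) / toK F (cfact F ((q F) ^ (i l) - 1))
        = toK F (cfact F n) * (coeff n (eC F ^ ((q F) ^ lead i - 1)) * ∏ l, (L F (i l))⁻¹) := by
    intro i
    simp only [StC_mul_BCnum_q_pow_sub_one, BCnum_q_pow_sub_one_div_cfact]
    rw [← Finset.mul_prod_erase _ _ (Finset.mem_univ ⟨0, hr⟩), lead, dif_pos hr]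
    ring
  rw [Finset.sum_filter_of_ne fun i _ hi => ?_, MPBC, Finset.mul_sum]
  · refine Finset.sum_congr rfl fun i _ => ?_
    rw [hterm]
    simp only [map_one, one_pow, one_mul, pow_one]
    rfl
  · by_contra hlt
    rw [hterm, coeff_eC_pow_of_lt F (not_le.mp hlt), zero_mul, mul_zero] at hi
    exact hi rfl

end Carlitz
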